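/- arXiv:1703.00891 — 2 statements merged into one kernel-verified Lean document; each statement's English description precedes it below -/
import Mathlib

section
/- Let d ≥ 1, ν > 1 and c₀ ∈ (0,1]. Then there exists c > 0, depending on d, ν, c₀, such that for every f ∈ L¹(ℝ^d) whose Fourier transform satisfies |f̂(ξ)| ≥ c₀ for all |ξ| ≤ c₀, and for all λ, δ with 0 < λ ≤ δ and c₀ λ^{-1} δ ≥ 2, the function h(x) := λ^{-4/(ν-1)} f(λ^{-1} δ x) satisfies ‖h‖_{H^{-d/2}} ≥ c λ^{-4/(ν-1)} (λ δ^{-1})^d ( log(c₀ λ^{-1} δ) )^{1/2}. -/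
/-!
Put `s = δ / λ`. Rescaling gives `ĥ(ξ) = λ^{-4/(ν-1)} s^{-d} f̂(ξ / s)`, so
`|ĥ| ≥ λ^{-4/(ν-1)} s^{-d} c₀` on the ball of radius `R = c₀ s`. On the annulus `1 ≤ |ξ| ≤ R` the
weight `(1 + |ξ|²)^{-d/2}` is at least `2^{-d/2} |ξ|^{-d}`, and in polar coordinates
`∫_{1 ≤ |ξ| ≤ R} |ξ|^{-d} dξ = d |B₁| log R`: the critical exponent `-d` is what produces the
logarithm.
-/

open MeasureTheory Real Complex
open scoped FourierTransform ENNReal SchwartzMap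

/-- The Sobolev norm `‖f‖_{H^γ} = (∫ (1+|ξ|²)^γ |f̂(ξ)|² dξ)^{1/2}`, valued in `[0,∞]`. -/
noncomputable def sobNorm {d : ℕ} (γ : ℝ) (f : EuclideanSpace ℝ (Fin d) → ℂ) : ℝ≥0∞ :=
  (∫⁻ ξ : EuclideanSpace ℝ (Fin d),
      ENNReal.ofReal ((1 + ‖ξ‖ ^ 2) ^ γ) * (‖𝓕 f ξ‖₊ : ℝ≥0∞) ^ (2 : ℝ)) ^ ((1 : ℝ) / 2)

open Metric Set
open scoped RealInnerProductSpace

section Fourier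

variable {V E : Type*} [NormedAddCommGroup V] [InnerProductSpace ℝ V] [FiniteDimensional ℝ V]
  [MeasurableSpace V] [BorelSpace V] [NormedAddCommGroup E] [NormedSpace ℂ E]

theorem Real.fourier_smul_comp_smul (f : V → E) (a : ℝ) {s : ℝ} (hs : 0 < s) (ξ : V) :
    𝓕 (fun x => a • f (s • x)) ξ = (a / s ^ Module.finrank ℝ V) • 𝓕 f (s⁻¹ • ξ) := by
  have hphase (x : V) :
      𝐞 (-⟪x, ξ⟫) • a • f (s • x) = a • (𝐞 (-⟪s • x, s⁻¹ • ξ⟫) • f (s • x)) := by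
    rw [real_inner_smul_left, real_inner_smul_right, ← mul_assoc, mul_inv_cancel₀ hs.ne', one_mul,
      smul_comm]
  rw [Real.fourier_eq, Real.fourier_eq]
  simp only [hphase, integral_smul]
  rw [Measure.integral_comp_smul volume (fun w : V => 𝐞 (-⟪w, s⁻¹ • ξ⟫) • f w) s, smul_smul,
    abs_of_pos (inv_pos.mpr (pow_pos hs _)), div_eq_mul_inv]

end Fourier

section Annulus

variable {E : Type*} [NormedAddCommGroup E] [NormedSpace ℝ E] [FiniteDimensional ℝ E]
  [MeasurableSpace E] [BorelSpace E] (μ : Measure E) [μ.IsAddHaarMeasure]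

theorem integral_annulus_norm_rpow_neg_finrank [Nontrivial E] {R : ℝ} (hR : 1 ≤ R) :
    ∫ x in {x : E | ‖x‖ ∈ Icc 1 R}, ‖x‖ ^ (-(Module.finrank ℝ E : ℝ)) ∂μ =
      Module.finrank ℝ E * μ.real (ball 0 1) * Real.log R := by
  set n := Module.finrank ℝ E
  have hn : 1 ≤ n := Module.finrank_pos
  have hpos : Icc (1 : ℝ) R ⊆ Ioi 0 := fun y hy => one_pos.trans_le hy.1
  have hradial : (fun y : ℝ => y ^ (n - 1) • (Icc 1 R).indicator (fun y => y ^ (-(n : ℝ))) y) =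
      (Icc 1 R).indicator (fun y => y⁻¹) := by
    ext y
    by_cases hy : y ∈ Icc 1 R
    · rw [indicator_of_mem hy, indicator_of_mem hy, smul_eq_mul, ← Real.rpow_natCast,
        ← Real.rpow_add (hpos hy), Nat.cast_sub hn, Nat.cast_one,
        show (n : ℝ) - 1 + -n = -1 by ring, Real.rpow_neg_one]
    · rw [indicator_of_notMem hy, indicator_of_notMem hy, smul_zero]
  have hpolar := integral_fun_norm_addHaar μ ((Icc 1 R).indicator fun y : ℝ => y ^ (-(n : ℝ)))
  have hA : MeasurableSet {x : E | ‖x‖ ∈ Icc 1 R} := measurableSet_Icc.preimage measurable_norm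
  rw [← integral_indicator hA]
  change ∫ x, (Icc 1 R).indicator (fun y : ℝ => y ^ (-(n : ℝ))) ‖x‖ ∂μ = _
  rw [hpolar, hradial, integral_indicator measurableSet_Icc,
    Measure.restrict_restrict measurableSet_Icc, inter_eq_left.mpr hpos,
    integral_Icc_eq_integral_Ioc, ← intervalIntegral.integral_of_le hR,
    integral_inv_of_pos one_pos (by linarith), div_one, nsmul_eq_mul, smul_eq_mul, mul_assoc]

theorem integrableOn_annulus_norm_rpow_neg {R a : ℝ} (ha : 0 ≤ a) :
    IntegrableOn (fun x : E => ‖x‖ ^ (-a)) {x | ‖x‖ ∈ Icc 1 R} μ := by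
  have hfin : μ {x : E | ‖x‖ ∈ Icc 1 R} ≠ ⊤ :=
    ((measure_mono fun x hx => mem_closedBall_zero_iff.mpr hx.2).trans_lt
      (measure_closedBall_lt_top (x := (0 : E)) (r := R))).ne
  refine Measure.integrableOn_of_bounded (M := 1) hfin
    (measurable_norm.pow_const _).aestronglyMeasurable ?_
  filter_upwards [ae_restrict_mem (measurableSet_Icc.preimage measurable_norm)] with x hx
  rw [Real.norm_of_nonneg (by positivity)]
  exact Real.rpow_le_one_of_one_le_of_nonpos hx.1 (neg_nonpos.mpr ha)

end Annulus

theorem two_rpow_neg_half_mul_rpow_neg_le {r a : ℝ} (hr : 1 ≤ r) (ha : 0 ≤ a) :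
    (2 : ℝ) ^ (-a / 2) * r ^ (-a) ≤ (1 + r ^ 2) ^ (-a / 2) := by
  have hr0 : 0 ≤ r := zero_le_one.trans hr
  calc (2 : ℝ) ^ (-a / 2) * r ^ (-a) = (2 * r ^ 2) ^ (-a / 2) := by
        rw [Real.mul_rpow zero_le_two (by positivity), ← Real.rpow_natCast, ← Real.rpow_mul hr0]
        congr 2
        push_cast
        ring
    _ ≤ (1 + r ^ 2) ^ (-a / 2) :=
        Real.rpow_le_rpow_of_nonpos (by positivity) (by nlinarith) (by linarith)

noncomputable def annulusConst (d : ℕ) : ℝ :=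
  (2 : ℝ) ^ (-(d : ℝ) / 2) * (d * volume.real (ball (0 : EuclideanSpace ℝ (Fin d)) 1))

theorem annulusConst_pos {d : ℕ} (hd : 1 ≤ d) : 0 < annulusConst d :=
  have : Nonempty (Fin d) := ⟨⟨0, hd⟩⟩
  mul_pos (by positivity) (mul_pos (by positivity)
    (ENNReal.toReal_pos (measure_ball_pos volume 0 one_pos).ne' measure_ball_lt_top.ne))

theorem ofReal_le_sobNorm_integrand_of_le_norm_fourier_on_ball {d : ℕ} (hd : 1 ≤ d)
    {g : EuclideanSpace ℝ (Fin d) → ℂ} {K R : ℝ} (hK : 0 ≤ K) (hR : 1 ≤ R)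
    (hg : ∀ ξ, ‖ξ‖ ≤ R → K ≤ ‖𝓕 g ξ‖) :
    ENNReal.ofReal (K ^ 2 * (annulusConst d * Real.log R)) ≤
      ∫⁻ ξ, ENNReal.ofReal ((1 + ‖ξ‖ ^ 2) ^ (-(d : ℝ) / 2)) * (‖𝓕 g ξ‖₊ : ℝ≥0∞) ^ (2 : ℝ) := by
  have : Nonempty (Fin d) := ⟨⟨0, hd⟩⟩
  set A := {ξ : EuclideanSpace ℝ (Fin d) | ‖ξ‖ ∈ Icc 1 R}
  have hA : MeasurableSet A := measurableSet_Icc.preimage measurable_norm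
  have hintegral : ∫ ξ in A, K ^ 2 * (2 : ℝ) ^ (-(d : ℝ) / 2) * ‖ξ‖ ^ (-(d : ℝ)) =
      K ^ 2 * (annulusConst d * Real.log R) := by
    have := integral_annulus_norm_rpow_neg_finrank
      (volume : Measure (EuclideanSpace ℝ (Fin d))) hR
    rw [finrank_euclideanSpace_fin] at this
    rw [integral_const_mul, this, annulusConst]
    ring
  have hpointwise : ∀ ξ ∈ A, ENNReal.ofReal (K ^ 2 * (2 : ℝ) ^ (-(d : ℝ) / 2) * ‖ξ‖ ^ (-(d : ℝ))) ≤
      ENNReal.ofReal ((1 + ‖ξ‖ ^ 2) ^ (-(d : ℝ) / 2)) * (‖𝓕 g ξ‖₊ : ℝ≥0∞) ^ (2 : ℝ) := by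
    intro ξ hξ
    rw [ENNReal.rpow_two, ← enorm_eq_nnnorm, ← ofReal_norm, ← ENNReal.ofReal_pow (norm_nonneg _),
      ← ENNReal.ofReal_mul (by positivity)]
    refine ENNReal.ofReal_le_ofReal ?_
    calc K ^ 2 * (2 : ℝ) ^ (-(d : ℝ) / 2) * ‖ξ‖ ^ (-(d : ℝ))
        = ((2 : ℝ) ^ (-(d : ℝ) / 2) * ‖ξ‖ ^ (-(d : ℝ))) * K ^ 2 := by ring
      _ ≤ (1 + ‖ξ‖ ^ 2) ^ (-(d : ℝ) / 2) * ‖𝓕 g ξ‖ ^ 2 :=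
        mul_le_mul (two_rpow_neg_half_mul_rpow_neg_le hξ.1 d.cast_nonneg)
          (pow_le_pow_left₀ hK (hg ξ hξ.2) 2) (by positivity) (by positivity)
  calc ENNReal.ofReal (K ^ 2 * (annulusConst d * Real.log R))
      = ∫⁻ ξ in A, ENNReal.ofReal (K ^ 2 * (2 : ℝ) ^ (-(d : ℝ) / 2) * ‖ξ‖ ^ (-(d : ℝ))) := by
        rw [← hintegral, ofReal_integral_eq_lintegral_ofReal
          ((integrableOn_annulus_norm_rpow_neg volume d.cast_nonneg).const_mul _)
          (ae_of_all _ fun ξ => by positivity)]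
    _ ≤ _ := setLIntegral_mono' hA hpointwise
    _ ≤ _ := setLIntegral_le_lintegral A _

theorem le_sobNorm_of_le_norm_fourier_on_ball {d : ℕ} (hd : 1 ≤ d)
    {g : EuclideanSpace ℝ (Fin d) → ℂ} {K R : ℝ} (hK : 0 ≤ K) (hR : 1 ≤ R)
    (hg : ∀ ξ, ‖ξ‖ ≤ R → K ≤ ‖𝓕 g ξ‖) :
    ENNReal.ofReal (K * (annulusConst d * Real.log R) ^ ((1 : ℝ) / 2)) ≤
      sobNorm (-(d : ℝ) / 2) g := by
  have hClog : 0 ≤ annulusConst d * Real.log R :=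
    mul_nonneg (annulusConst_pos hd).le (Real.log_nonneg hR)
  calc ENNReal.ofReal (K * (annulusConst d * Real.log R) ^ ((1 : ℝ) / 2))
      = ENNReal.ofReal (K ^ 2 * (annulusConst d * Real.log R)) ^ ((1 : ℝ) / 2) := by
        rw [ENNReal.ofReal_rpow_of_nonneg (by positivity) (by norm_num),
          Real.mul_rpow (sq_nonneg K) hClog, ← Real.sqrt_eq_rpow (K ^ 2), Real.sqrt_sq hK]
    _ ≤ sobNorm (-(d : ℝ) / 2) g := ENNReal.rpow_le_rpow
        (ofReal_le_sobNorm_integrand_of_le_norm_fourier_on_ball hd hK hR hg) (by norm_num)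

theorem stmt16_general (d : ℕ) (hd : 1 ≤ d) (ν : ℝ)
    (c₀ : ℝ) (hc₀ : c₀ ∈ Set.Ioc (0 : ℝ) 1) :
    ∃ c > (0 : ℝ), ∀ f : EuclideanSpace ℝ (Fin d) → ℂ,
      MeasureTheory.Integrable f →
      (∀ ξ : EuclideanSpace ℝ (Fin d), ‖ξ‖ ≤ c₀ → c₀ ≤ ‖𝓕 f ξ‖) →
      ∀ l δ : ℝ, 0 < l → l ≤ δ → 2 ≤ c₀ * l⁻¹ * δ →
        ENNReal.ofReal (c * l ^ (-(4 / (ν - 1))) * (l * δ⁻¹) ^ (d : ℝ) *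
            Real.log (c₀ * l⁻¹ * δ) ^ ((1 : ℝ) / 2)) ≤
          sobNorm (-(d : ℝ) / 2) (fun x => (l ^ (-(4 / (ν - 1))) : ℝ) • f ((l⁻¹ * δ) • x)) := by
  set C := annulusConst d
  have hC : 0 < C := annulusConst_pos hd
  obtain ⟨hc₀pos, -⟩ := hc₀
  refine ⟨c₀ * C ^ ((1 : ℝ) / 2), by positivity, fun f _ hf l δ hl hlδ hR => ?_⟩
  set s := l⁻¹ * δ
  set a := l ^ (-(4 / (ν - 1)))
  have hs : 0 < s := mul_pos (inv_pos.mpr hl) (hl.trans_le hlδ)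
  have ha : 0 < a := Real.rpow_pos_of_pos hl _
  have hlow : ∀ ξ, ‖ξ‖ ≤ c₀ * l⁻¹ * δ → a / s ^ d * c₀ ≤ ‖𝓕 (fun x => a • f (s • x)) ξ‖ := by
    intro ξ hξ
    rw [Real.fourier_smul_comp_smul f a hs, finrank_euclideanSpace_fin, norm_smul,
      Real.norm_of_nonneg (by positivity)]
    refine mul_le_mul_of_nonneg_left (hf _ ?_) (by positivity)
    rw [norm_smul, Real.norm_of_nonneg (inv_nonneg.mpr hs.le), inv_mul_le_iff₀ hs, mul_comm]
    exact hξ.trans_eq (mul_assoc _ _ _)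
  have hscale : (l * δ⁻¹) ^ (d : ℝ) = (s ^ d)⁻¹ := by
    rw [Real.rpow_natCast, ← inv_pow, mul_inv, inv_inv]
  calc ENNReal.ofReal (c₀ * C ^ ((1 : ℝ) / 2) * a * (l * δ⁻¹) ^ (d : ℝ) *
        Real.log (c₀ * l⁻¹ * δ) ^ ((1 : ℝ) / 2))
      = ENNReal.ofReal (a / s ^ d * c₀ * (C * Real.log (c₀ * l⁻¹ * δ)) ^ ((1 : ℝ) / 2)) := by
        rw [hscale, Real.mul_rpow hC.le (Real.log_nonneg (by linarith))]
        ring_nf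
    _ ≤ _ := le_sobNorm_of_le_norm_fourier_on_ball hd (by positivity) (by linarith) hlow

/-- logarithmic lower bound for the `H^{-d/2}` norm of the rescaled
function `h(x) = λ^{-4/(ν-1)} f(λ^{-1}δx)` when `|f̂| ≥ c₀` on the ball of radius `c₀`. -/
theorem stmt16 (d : ℕ) (hd : 1 ≤ d) (ν : ℝ) (hν : 1 < ν)
    (c₀ : ℝ) (hc₀ : c₀ ∈ Set.Ioc (0 : ℝ) 1) :
    ∃ c > (0 : ℝ), ∀ f : EuclideanSpace ℝ (Fin d) → ℂ,
      MeasureTheory.Integrable f →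
      (∀ ξ : EuclideanSpace ℝ (Fin d), ‖ξ‖ ≤ c₀ → c₀ ≤ ‖𝓕 f ξ‖) →
      ∀ l δ : ℝ, 0 < l → l ≤ δ → 2 ≤ c₀ * l⁻¹ * δ →
        ENNReal.ofReal (c * l ^ (-(4 / (ν - 1))) * (l * δ⁻¹) ^ (d : ℝ) *
            Real.log (c₀ * l⁻¹ * δ) ^ ((1 : ℝ) / 2)) ≤
          sobNorm (-(d : ℝ) / 2) (fun x => (l ^ (-(4 / (ν - 1))) : ℝ) • f ((l⁻¹ * δ) • x)) :=
  stmt16_general d hd ν c₀ hc₀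
end

section
/- Let d ≥ 1, ν > 1, μ ∈ {1,-1}, and let φ₀ be a Schwartz function on ℝ^d that is not identically zero. For a > 0 and t ∈ ℝ define φ^{(a,0)}(t,x) := a φ₀(x) exp(-i μ a^{ν-1} t |φ₀(x)|^{ν-1}). Then there exist constants c > 0 and C > 0 such that for all a, a' ∈ [1/2, 2] with a ≠ a', there exists a time t with |a - a'|^{-1} ≤ t ≤ C |a - a'|^{-1} such that ‖φ^{(a,0)}(t,·) - φ^{(a',0)}(t,·)‖_{L²(ℝ^d)} ≥ c. -/
open MeasureTheory Real Complex
open scoped ENNReal SchwartzMap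

lemma aux_cos_odd (j : ℤ) (δ : ℝ) (hδ : |δ| ≤ π/2) :
    Real.cos ((2*(j:ℝ)+1)*π + δ) ≤ 0 := by
  have h : (2*(j:ℝ)+1)*π + δ = (π - (-δ)) + (j:ℝ) * (2*π) := by ring
  rw [h, Real.cos_add_int_mul_two_pi, Real.cos_pi_sub, Real.cos_neg]
  have h2 := abs_le.mp hδ
  have : (0:ℝ) ≤ Real.cos δ := Real.cos_nonneg_of_mem_Icc ⟨by linarith [h2.1], h2.2⟩
  linarith

lemma aux_norm_lb {a a' : ℝ} (ha : 1/2 ≤ a) (ha' : 0 ≤ a') {ψ : ℝ} (hψ : Real.cos ψ ≤ 0) :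
    (1:ℝ)/2 ≤ ‖(a:ℂ) - (a':ℂ) * Complex.exp ((ψ:ℝ) * Complex.I)‖ := by
  have hre : ((a:ℂ) - (a':ℂ) * Complex.exp ((ψ:ℝ) * Complex.I)).re = a - a' * Real.cos ψ := by
    simp [Complex.sub_re, Complex.re_ofReal_mul, Complex.exp_ofReal_mul_I_re]
  have h1 : (1:ℝ)/2 ≤ |((a:ℂ) - (a':ℂ) * Complex.exp ((ψ:ℝ) * Complex.I)).re| := by
    rw [hre, _root_.abs_of_nonneg (by nlinarith)]
    nlinarith
  exact h1.trans (Complex.abs_re_le_norm _)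

lemma aux_rpow_bound (z : ℝ) {c : ℝ} (h1 : 1/2 ≤ c) (h2 : c ≤ 2) :
    Real.exp (-(|z| * Real.log 2)) ≤ c ^ z ∧ c ^ z ≤ Real.exp (|z| * Real.log 2) := by
  have hc : 0 < c := by linarith
  have hlog2 : 0 < Real.log 2 := Real.log_pos (by norm_num)
  have hlc : |Real.log c| ≤ Real.log 2 := by
    rw [abs_le]
    constructor
    · have : Real.log (1/2) ≤ Real.log c := Real.log_le_log (by norm_num) h1
      rw [show (1:ℝ)/2 = 2⁻¹ by norm_num, Real.log_inv] at this
      linarith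
    · exact Real.log_le_log hc h2
  have habs : |Real.log c * z| ≤ |z| * Real.log 2 := by
    rw [abs_mul, mul_comm]
    exact mul_le_mul_of_nonneg_left hlc (abs_nonneg _)
  have h := abs_le.mp habs
  rw [Real.rpow_def_of_pos hc]
  exact ⟨Real.exp_le_exp.mpr (by linarith [h.1]), Real.exp_le_exp.mpr h.2⟩

lemma aux_mvt (ν : ℝ) (hν : 1 < ν) {a a' : ℝ} (ha : 1/2 ≤ a) (ha' : a' ≤ 2) (hlt : a < a') :
    (ν-1) * Real.exp (-(|ν-2| * Real.log 2)) * (a'-a) ≤ a' ^ (ν-1) - a ^ (ν-1) ∧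
    a' ^ (ν-1) - a ^ (ν-1) ≤ (ν-1) * Real.exp (|ν-2| * Real.log 2) * (a'-a) := by
  have hcont : ContinuousOn (fun s : ℝ => s ^ (ν-1)) (Set.Icc a a') := by
    intro s hs
    exact (Real.continuousAt_rpow_const s (ν-1) (Or.inr (by linarith))).continuousWithinAt
  have hderiv : ∀ s ∈ Set.Ioo a a', HasDerivAt (fun s : ℝ => s ^ (ν-1)) ((ν-1) * s ^ (ν-1-1)) s := by
    intro s hs
    exact Real.hasDerivAt_rpow_const (Or.inl (by nlinarith [hs.1]))
  obtain ⟨ξ, hξ, heq⟩ := exists_hasDerivAt_eq_slope _ _ hlt hcont hderiv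
  have hξ1 : 1/2 ≤ ξ := le_of_lt (lt_of_le_of_lt ha hξ.1)
  have hξ2 : ξ ≤ 2 := le_of_lt (lt_of_lt_of_le hξ.2 ha')
  have hb := aux_rpow_bound (ν-1-1) hξ1 hξ2
  rw [show ν - 1 - 1 = ν - 2 by ring] at hb
  have hsub : 0 < a' - a := by linarith
  have hDval : a' ^ (ν-1) - a ^ (ν-1) = (ν-1) * ξ ^ (ν-2) * (a'-a) := by
    rw [show ν - 1 - 1 = ν - 2 by ring] at heq
    field_simp at heq
    linarith [heq]
  rw [hDval]
  constructor
  · gcongr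
    · linarith
  · gcongr
    · have := Real.exp_pos (-(|ν-2| * Real.log 2))
      nlinarith [hb.1]

lemma aux_key (d : ℕ) (ν : ℝ) (hν : 1 < ν) (μ : ℝ) (hμ : μ = 1 ∨ μ = -1)
    (φ₀ : 𝓢(EuclideanSpace ℝ (Fin d), ℂ)) (hφ₀ : φ₀ ≠ 0) :
    ∃ c > (0:ℝ), ∃ C > (0:ℝ),
      ∀ a ∈ Set.Icc ((1:ℝ)/2) 2, ∀ a' ∈ Set.Icc ((1:ℝ)/2) 2, a < a' →
        ∃ t : ℝ, (a'-a)⁻¹ ≤ t ∧ t ≤ C * (a'-a)⁻¹ ∧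
          ENNReal.ofReal c ≤
            eLpNorm (fun x =>
                (a : ℂ) * φ₀ x * Complex.exp (-(μ : ℂ) * Complex.I *
                    ((a ^ (ν - 1) : ℝ) : ℂ) * (t : ℂ) * ((‖φ₀ x‖ ^ (ν - 1) : ℝ) : ℂ)) -
                (a' : ℂ) * φ₀ x * Complex.exp (-(μ : ℂ) * Complex.I *
                    ((a' ^ (ν - 1) : ℝ) : ℂ) * (t : ℂ) * ((‖φ₀ x‖ ^ (ν - 1) : ℝ) : ℂ)))
              2 MeasureTheory.volume := by
  obtain ⟨x₀, hx₀⟩ := DFunLike.ne_iff.mp hφ₀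
  have hx₀' : φ₀ x₀ ≠ 0 := by simpa using hx₀
  have hn₀ : 0 < ‖φ₀ x₀‖ := norm_pos_iff.mpr hx₀'
  set n₀ : ℝ := ‖φ₀ x₀‖ with hn₀def
  set g₀ : ℝ := n₀ ^ (ν-1) with hg₀def
  have hg₀ : 0 < g₀ := Real.rpow_pos_of_pos hn₀ _
  set k₁ : ℝ := (ν-1) * Real.exp (-(|ν-2| * Real.log 2)) with hk₁def
  set k₂ : ℝ := (ν-1) * Real.exp (|ν-2| * Real.log 2) with hk₂def
  have hk₁ : 0 < k₁ := mul_pos (by linarith) (Real.exp_pos _)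
  have hk₂ : 0 < k₂ := mul_pos (by linarith) (Real.exp_pos _)
  have hπ : (0:ℝ) < π := Real.pi_pos
  set M₀ : ℝ := k₂ * g₀ / π + 3 with hM₀def
  have hM₀ : 0 < M₀ := by positivity
  set ε : ℝ := g₀ / (2 * M₀) with hεdef
  have hε : 0 < ε := by positivity
  -- find a good ball around x₀
  have hcont : ContinuousAt (fun x => ‖φ₀ x‖) x₀ := (φ₀.continuous.norm).continuousAt
  have hcontg : ContinuousAt (fun x => ‖φ₀ x‖ ^ (ν-1)) x₀ := hcont.rpow_const (Or.inr (by linarith))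
  have h1 : ∀ᶠ x in nhds x₀, n₀/2 < ‖φ₀ x‖ := hcont.eventually (lt_mem_nhds (by linarith))
  have h2 : ∀ᶠ x in nhds x₀, |‖φ₀ x‖ ^ (ν-1) - g₀| < ε := by
    have hball : Metric.ball g₀ ε ∈ nhds ((fun x => ‖φ₀ x‖ ^ (ν-1)) x₀) :=
      Metric.ball_mem_nhds _ hε
    filter_upwards [hcontg.eventually_mem hball] with x hx
    simpa [Real.dist_eq] using hx
  obtain ⟨r', hr', hballp⟩ := Metric.eventually_nhds_iff_ball.mp (h1.and h2)
  set S := Metric.closedBall x₀ (r'/2) with hSdef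
  have hSsub : S ⊆ Metric.ball x₀ r' := Metric.closedBall_subset_ball (by linarith)
  have hSprop : ∀ x ∈ S, n₀/2 < ‖φ₀ x‖ ∧ |‖φ₀ x‖ ^ (ν-1) - g₀| < ε :=
    fun x hx => hballp x (hSsub hx)
  set κ : ℝ := n₀/4 with hκdef
  have hκ : 0 < κ := by positivity
  set cE : ℝ≥0∞ := eLpNorm (S.indicator fun _ => κ) 2 volume with hcEdef
  have hcEeq : cE = (‖κ‖₊ : ℝ≥0∞) * (volume S) ^ (1 / (2:ℝ≥0∞).toReal) :=
    eLpNorm_indicator_const measurableSet_closedBall (by norm_num) (by norm_num)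
  have hvolpos : 0 < volume S := Metric.measure_closedBall_pos volume x₀ (by linarith)
  have hvoltop : volume S < ⊤ := measure_closedBall_lt_top
  have hcE0 : cE ≠ 0 := by
    rw [hcEeq]
    apply mul_ne_zero
    · simpa using hκ.ne'
    · exact (ENNReal.rpow_pos hvolpos hvoltop.ne).ne'
  have hcEtop : cE ≠ ⊤ := by
    rw [hcEeq]
    exact ENNReal.mul_ne_top ENNReal.coe_ne_top
      (ENNReal.rpow_ne_top_of_nonneg (by positivity) hvoltop.ne)
  refine ⟨cE.toReal, ENNReal.toReal_pos hcE0 hcEtop, 1 + 3*π/(k₁*g₀), by positivity, ?_⟩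
  rintro a ⟨ha1, ha2⟩ a' ⟨ha'1, ha'2⟩ hlt
  obtain ⟨hD1, hD2⟩ := aux_mvt ν hν ha1 ha'2 hlt
  rw [← hk₁def] at hD1
  rw [← hk₂def] at hD2
  set D : ℝ := a' ^ (ν-1) - a ^ (ν-1) with hDdef
  have hsub : 0 < a' - a := by linarith
  have hD : 0 < D := lt_of_lt_of_le (by positivity) hD1
  set L : ℝ := (a'-a)⁻¹ with hLdef
  have hL : 0 < L := by positivity
  set q : ℝ := L * D * g₀ / π with hqdef
  have hq : 0 < q := by positivity
  set m : ℕ := 2 * ⌈q/2⌉₊ + 1 with hmdef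
  have hmq : q ≤ (m:ℝ) := by
    have h := Nat.le_ceil (q/2)
    rw [hmdef]
    push_cast
    linarith
  have hm3 : (m:ℝ) ≤ q + 3 := by
    have h := Nat.ceil_lt_add_one (by positivity : (0:ℝ) ≤ q/2)
    rw [hmdef]
    push_cast
    linarith
  have hm0 : 0 < (m:ℝ) := lt_of_lt_of_le hq hmq
  have hLD : L * D ≤ k₂ := by
    have h : L * D ≤ L * (k₂ * (a'-a)) := by gcongr
    calc L * D ≤ L * (k₂ * (a'-a)) := h
      _ = k₂ := by rw [hLdef]; field_simp
  have hqM : q ≤ k₂ * g₀ / π := by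
    rw [hqdef]
    gcongr
  have hmM : (m:ℝ) ≤ M₀ := by rw [hM₀def]; linarith
  set t : ℝ := (m:ℝ) * π / (D * g₀) with htdef
  have ht : 0 < t := by positivity
  have htD : t * D = (m:ℝ) * π / g₀ := by rw [htdef]; field_simp
  refine ⟨t, ?_, ?_, ?_⟩
  · rw [htdef, le_div_iff₀ (by positivity)]
    have h : L * (D * g₀) = q * π := by rw [hqdef]; field_simp
    rw [h]
    exact mul_le_mul_of_nonneg_right hmq hπ.le
  · have h1 : t ≤ (q+3) * π / (D * g₀) := by rw [htdef]; gcongr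
    have h2 : (q+3) * π / (D*g₀) = L + 3*π/(D*g₀) := by rw [hqdef]; field_simp
    have h3 : 3*π/(D*g₀) ≤ 3*π/(k₁*(a'-a)*g₀) := by
      gcongr
    have h4 : 3*π/(k₁*(a'-a)*g₀) = (3*π/(k₁*g₀)) * L := by rw [hLdef]; field_simp
    calc t ≤ (q+3) * π / (D*g₀) := h1
      _ = L + 3*π/(D*g₀) := h2
      _ ≤ L + (3*π/(k₁*g₀)) * L := by rw [← h4]; linarith
      _ = (1 + 3*π/(k₁*g₀)) * L := by ring
  · -- the eLpNorm bound
    have hnorm : ∀ x : EuclideanSpace ℝ (Fin d),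
        ‖S.indicator (fun _ => κ) x‖ ≤
        ‖(a : ℂ) * φ₀ x * Complex.exp (-(μ : ℂ) * Complex.I *
              ((a ^ (ν - 1) : ℝ) : ℂ) * (t : ℂ) * ((‖φ₀ x‖ ^ (ν - 1) : ℝ) : ℂ)) -
          (a' : ℂ) * φ₀ x * Complex.exp (-(μ : ℂ) * Complex.I *
              ((a' ^ (ν - 1) : ℝ) : ℂ) * (t : ℂ) * ((‖φ₀ x‖ ^ (ν - 1) : ℝ) : ℂ))‖ := by
      intro x
      by_cases hx : x ∈ S
      · rw [Set.indicator_of_mem hx, Real.norm_eq_abs, _root_.abs_of_pos hκ]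
        obtain ⟨hx1, hx2⟩ := hSprop x hx
        set gx : ℝ := ‖φ₀ x‖ ^ (ν-1) with hgxdef
        have hgxnn : 0 ≤ gx := Real.rpow_nonneg (norm_nonneg _) _
        set ψ : ℝ := -(μ * (t * D) * gx) with hψdef
        have hexp : Complex.exp (-(μ : ℂ) * Complex.I * ((a ^ (ν - 1) : ℝ) : ℂ) * (t : ℂ) * ((gx : ℝ) : ℂ))
              * Complex.exp ((ψ:ℝ) * Complex.I)
            = Complex.exp (-(μ : ℂ) * Complex.I * ((a' ^ (ν - 1) : ℝ) : ℂ) * (t : ℂ) * ((gx : ℝ) : ℂ)) := by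
          rw [← Complex.exp_add]
          congr 1
          rw [hψdef, hDdef]
          push_cast
          ring
        have hfac : (a : ℂ) * φ₀ x * Complex.exp (-(μ : ℂ) * Complex.I *
              ((a ^ (ν - 1) : ℝ) : ℂ) * (t : ℂ) * ((gx : ℝ) : ℂ)) -
            (a' : ℂ) * φ₀ x * Complex.exp (-(μ : ℂ) * Complex.I *
              ((a' ^ (ν - 1) : ℝ) : ℂ) * (t : ℂ) * ((gx : ℝ) : ℂ))
            = φ₀ x * Complex.exp (-(μ : ℂ) * Complex.I *
              ((a ^ (ν - 1) : ℝ) : ℂ) * (t : ℂ) * ((gx : ℝ) : ℂ)) *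
              ((a:ℂ) - (a':ℂ) * Complex.exp ((ψ:ℝ) * Complex.I)) := by
          rw [← hexp]
          ring
        rw [hfac, norm_mul, norm_mul]
        have hnexp : ‖Complex.exp (-(μ : ℂ) * Complex.I *
              ((a ^ (ν - 1) : ℝ) : ℂ) * (t : ℂ) * ((gx : ℝ) : ℂ))‖ = 1 := by
          rw [show -(μ : ℂ) * Complex.I * ((a ^ (ν - 1) : ℝ) : ℂ) * (t : ℂ) * ((gx : ℝ) : ℂ)
              = ((-(μ * (a ^ (ν-1)) * t * gx) : ℝ) : ℂ) * Complex.I from by push_cast; ring]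
          rw [Complex.norm_exp_ofReal_mul_I]
        rw [hnexp, mul_one]
        -- cosine bound
        have habs : (m:ℝ)*π*|gx - g₀|/g₀ ≤ π/2 := by
          have hA : (m:ℝ)*π*|gx-g₀| ≤ M₀*π*ε := by
            gcongr
          have hB : M₀*π*ε/g₀ = π/2 := by
            rw [hεdef]; field_simp
          calc (m:ℝ)*π*|gx-g₀|/g₀ ≤ M₀*π*ε/g₀ := by gcongr
            _ = π/2 := hB
        have habs' : ∀ u : ℝ, |u| = |gx - g₀| → |(m:ℝ)*π*u/g₀| ≤ π/2 := by
          intro u hu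
          rw [abs_div, abs_mul, abs_mul, Nat.abs_cast, _root_.abs_of_nonneg hπ.le,
            _root_.abs_of_nonneg hg₀.le, hu]
          exact habs
        have hcos : Real.cos ψ ≤ 0 := by
          rw [hψdef, htD]
          rcases hμ with hμ1 | hμ1
          · rw [hμ1]
            have hkey : -(1 * ((m:ℝ) * π / g₀) * gx)
                = (2*((-(⌈q/2⌉₊:ℤ)-1 : ℤ):ℝ)+1)*π + (m:ℝ)*π*(g₀-gx)/g₀ := by
              rw [hmdef]
              push_cast
              field_simp
              ring
            rw [hkey]
            exact aux_cos_odd _ _ (habs' _ (abs_sub_comm _ _))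
          · rw [hμ1]
            have hkey : -(-1 * ((m:ℝ) * π / g₀) * gx)
                = (2*((⌈q/2⌉₊:ℤ):ℝ)+1)*π + (m:ℝ)*π*(gx-g₀)/g₀ := by
              rw [hmdef]
              push_cast
              field_simp
              ring
            rw [hkey]
            exact aux_cos_odd _ _ (habs' _ rfl)
        have hb := aux_norm_lb ha1 (by linarith : (0:ℝ) ≤ a') hcos
        calc κ = (n₀/2) * (1/2) := by rw [hκdef]; ring
          _ ≤ ‖φ₀ x‖ * ‖(a:ℂ) - (a':ℂ) * Complex.exp ((ψ:ℝ) * Complex.I)‖ :=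
            mul_le_mul hx1.le hb (by norm_num) (norm_nonneg _)
      · rw [Set.indicator_of_notMem hx]
        simpa using norm_nonneg _
    calc ENNReal.ofReal cE.toReal = cE := ENNReal.ofReal_toReal hcEtop
      _ ≤ _ := eLpNorm_mono hnorm

/-- decoherence of zero-dispersion solutions
`φ^{(a,0)}(t,x) = a φ₀(x) exp(-iμ a^{ν-1} t |φ₀(x)|^{ν-1})` for nearby amplitudes. -/
theorem stmt18 (d : ℕ) (hd : 1 ≤ d) (ν : ℝ) (hν : 1 < ν) (μ : ℝ) (hμ : μ = 1 ∨ μ = -1)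
    (φ₀ : 𝓢(EuclideanSpace ℝ (Fin d), ℂ)) (hφ₀ : φ₀ ≠ 0) :
    ∃ c > (0 : ℝ), ∃ C > (0 : ℝ),
      ∀ a ∈ Set.Icc ((1 : ℝ) / 2) 2, ∀ a' ∈ Set.Icc ((1 : ℝ) / 2) 2, a ≠ a' →
        ∃ t : ℝ, |a - a'|⁻¹ ≤ t ∧ t ≤ C * |a - a'|⁻¹ ∧
          ENNReal.ofReal c ≤
            eLpNorm (fun x =>
                (a : ℂ) * φ₀ x * Complex.exp (-(μ : ℂ) * Complex.I *
                    ((a ^ (ν - 1) : ℝ) : ℂ) * (t : ℂ) * ((‖φ₀ x‖ ^ (ν - 1) : ℝ) : ℂ)) -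
                (a' : ℂ) * φ₀ x * Complex.exp (-(μ : ℂ) * Complex.I *
                    ((a' ^ (ν - 1) : ℝ) : ℂ) * (t : ℂ) * ((‖φ₀ x‖ ^ (ν - 1) : ℝ) : ℂ)))
              2 MeasureTheory.volume := by
  obtain ⟨c, hc, C, hC, hkey⟩ := aux_key d ν hν μ hμ φ₀ hφ₀
  refine ⟨c, hc, C, hC, ?_⟩
  intro a ha a' ha' hne
  rcases lt_or_gt_of_ne hne with h | h
  · rw [show |a - a'| = a' - a from by
      rw [abs_sub_comm, _root_.abs_of_pos (by linarith : (0:ℝ) < a' - a)]]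
    exact hkey a ha a' ha' h
  · rw [show |a - a'| = a - a' from _root_.abs_of_pos (by linarith : (0:ℝ) < a - a')]
    obtain ⟨t, h1, h2, h3⟩ := hkey a' ha' a ha h
    refine ⟨t, h1, h2, ?_⟩
    have heq : eLpNorm (fun x =>
                (a : ℂ) * φ₀ x * Complex.exp (-(μ : ℂ) * Complex.I *
                    ((a ^ (ν - 1) : ℝ) : ℂ) * (t : ℂ) * ((‖φ₀ x‖ ^ (ν - 1) : ℝ) : ℂ)) -
                (a' : ℂ) * φ₀ x * Complex.exp (-(μ : ℂ) * Complex.I *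
                    ((a' ^ (ν - 1) : ℝ) : ℂ) * (t : ℂ) * ((‖φ₀ x‖ ^ (ν - 1) : ℝ) : ℂ)))
              2 (volume : Measure (EuclideanSpace ℝ (Fin d)))
        = eLpNorm (fun x =>
                (a' : ℂ) * φ₀ x * Complex.exp (-(μ : ℂ) * Complex.I *
                    ((a' ^ (ν - 1) : ℝ) : ℂ) * (t : ℂ) * ((‖φ₀ x‖ ^ (ν - 1) : ℝ) : ℂ)) -
                (a : ℂ) * φ₀ x * Complex.exp (-(μ : ℂ) * Complex.I *
                    ((a ^ (ν - 1) : ℝ) : ℂ) * (t : ℂ) * ((‖φ₀ x‖ ^ (ν - 1) : ℝ) : ℂ)))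
              2 volume := by
      rw [← eLpNorm_neg]
      congr 1
      funext x
      simp only [Pi.neg_apply]
      ring
    rw [heq]
    exact h3
end
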